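/- Let N be a semifinite von Neumann algebra with trace τ and G, P, Q projections in N. If T ∈ PNQ is (P·Q)-Fredholm and S ∈ GNP is (G·P)-Fredholm, then ST ∈ GNQ is (G·Q)-Fredholm and Ind(ST) = Ind(S) + Ind(T). -/

import Mathlib

open MeasureTheory ContinuousLinearMap
open scoped ENNReal NNReal

noncomputable section

variable {H : Type*} [NormedAddCommGroup H] [InnerProductSpace ℂ H] [CompleteSpace H]

/-- The orthogonal projection onto the closure of a submodule, as an operator on `H`. -/
noncomputable def projOnto (K : Submodule ℂ H) : H →L[ℂ] H :=
  haveI : CompleteSpace K.topologicalClosure :=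
    K.isClosed_topologicalClosure.completeSpace_coe
  K.topologicalClosure.subtypeL ∘L K.topologicalClosure.orthogonalProjectionOnto

/-- A (self-adjoint, idempotent) projection operator. -/
def IsProjOp (P : H →L[ℂ] H) : Prop := IsSelfAdjoint P ∧ P ∘L P = P

/-- A faithful normal semifinite trace on a von Neumann algebra `N`, together with its
real-valued extension `τℝ` to trace-class operators. -/
structure Trace (N : VonNeumannAlgebra H) where
  τ : (H →L[ℂ] H) → ℝ≥0∞
  τℝ : (H →L[ℂ] H) → ℝ
  map_add : ∀ S T : H →L[ℂ] H, S.IsPositive → T.IsPositive → τ (S + T) = τ S + τ T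
  map_smul : ∀ (c : ℝ≥0) (T : H →L[ℂ] H), T.IsPositive → τ ((c : ℝ) • T) = c * τ T
  tracial : ∀ T : H →L[ℂ] H, τ (adjoint T ∘L T) = τ (T ∘L adjoint T)
  faithful : ∀ T : H →L[ℂ] H, T.IsPositive → τ T = 0 → T = 0
  semifinite : ∀ P : H →L[ℂ] H, P ∈ N → IsProjOp P → P ≠ 0 →
    ∃ E : H →L[ℂ] H, E ∈ N ∧ IsProjOp E ∧ P ∘L E = E ∧ E ≠ 0 ∧ τ E < ∞
  τℝ_pos : ∀ T : H →L[ℂ] H, T.IsPositive → τℝ T = (τ T).toReal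
  τℝ_add : ∀ S T A B : H →L[ℂ] H, A.IsPositive → B.IsPositive →
    A ∘L A = adjoint S ∘L S → B ∘L B = adjoint T ∘L T → τ A < ∞ → τ B < ∞ →
    τℝ (S + T) = τℝ S + τℝ T
  τℝ_tracial : ∀ S T A : H →L[ℂ] H, A.IsPositive → A ∘L A = adjoint S ∘L S → τ A < ∞ →
    τℝ (S ∘L T) = τℝ (T ∘L S)

/-- Membership in the "skew corner" `P N Q`. -/
def MemCorner (N : VonNeumannAlgebra H) (P Q T : H →L[ℂ] H) : Prop :=
  T ∈ N ∧ P ∘L T ∘L Q = T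

/-- The projection `N_T^Q` onto `ker T ∩ range Q`. -/
noncomputable def kerProjIn (T Q : H →L[ℂ] H) : H →L[ℂ] H :=
  projOnto (LinearMap.ker (T : H →ₗ[ℂ] H) ⊓ LinearMap.range (Q : H →ₗ[ℂ] H))

variable {N : VonNeumannAlgebra H}

/-- `(P·Q)`-Fredholm for a bounded operator `T ∈ PNQ`. -/
def IsPQFredholm (tr : Trace N) (P Q T : H →L[ℂ] H) : Prop :=
  tr.τ (kerProjIn T Q) < ∞ ∧ tr.τ (kerProjIn (adjoint T) P) < ∞ ∧
  ∃ E : H →L[ℂ] H, E ∈ N ∧ IsProjOp E ∧ P ∘L E = E ∧ tr.τ E < ∞ ∧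
    LinearMap.range ((P - E : H →L[ℂ] H) : H →ₗ[ℂ] H) ≤ LinearMap.range (T : H →ₗ[ℂ] H)

/-- The `(P·Q)`-index `Ind(T) = τ(N_T^Q) − τ(N_{T*}^P)`. -/
noncomputable def pqIndex (tr : Trace N) (P Q T : H →L[ℂ] H) : ℝ :=
  (tr.τ (kerProjIn T Q)).toReal - (tr.τ (kerProjIn (adjoint T) P)).toReal

/-- The ideal `K_N` of `τ`-compact operators: the norm closure of the span of the
`τ`-finite projections in `N`. -/
def tauCompact (tr : Trace N) : Set (H →L[ℂ] H) :=
  closure ((Submodule.span ℂ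
    {E : H →L[ℂ] H | E ∈ N ∧ IsProjOp E ∧ tr.τ E < ∞} : Submodule ℂ (H →L[ℂ] H)) :
    Set (H →L[ℂ] H))

/-!
`τ` is tracial on all of `B(H)`, so all rank-one projections have the same trace `c ≠ 0`, and
additivity over an orthonormal basis gives `τ(E) = rank(E) · c` for every projection `E`
(`= ⊤` in infinite rank). Hence the kernel projections and the Fredholm witnesses have finite
rank; `range T` and `range S` are closed, since they become closed after adding a
finite-dimensional space, and then `ker T* ∩ range P` is a complement of `range T` in `range P`.
The index of `T` is thus the algebraic index of its restriction `range Q → range P`, and the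
algebraic index is additive under composition by rank–nullity. For `S T` the range is closed by
the same argument, and `N_{(ST)*}^G` is the required witness, `G - N_{(ST)*}^G` being the
projection onto `range (S T)`.
-/

open InnerProductSpace Module

section AlgebraicIndex

universe u

-- One universe for `U`, `V`, `W`, so that their ranks can be added in a single `Cardinal`.
variable {K : Type*} {U V W : Type u} [DivisionRing K] [AddCommGroup U] [Module K U]
  [AddCommGroup V] [Module K V] [AddCommGroup W] [Module K W]

open Submodule

lemma Submodule.rank_comap_subtype (p q : Submodule K V) :
    Module.rank K (q.comap p.subtype) = Module.rank K (p ⊓ q : Submodule K V) := by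
  rw [← map_comap_subtype, ← (equivMapOfInjective _ p.injective_subtype _).rank_eq]

lemma Submodule.rank_eq_rank_inf_add (p q : Submodule K V) :
    Module.rank K q = Module.rank K (p ⊓ q : Submodule K V) + Module.rank K (q.map p.mkQ) := by
  have h := (p.mkQ ∘ₗ q.subtype).rank_range_add_rank_ker
  rw [LinearMap.range_comp, range_subtype, LinearMap.ker_comp, ker_mkQ, rank_comap_subtype,
    inf_comm] at h
  rw [← h, add_comm]

lemma Submodule.rank_quotient_eq_rank_quotient_sup_add (p q : Submodule K V) :
    Module.rank K (V ⧸ p) = Module.rank K (V ⧸ p ⊔ q) + Module.rank K (q.map p.mkQ) := by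
  rw [← rank_quotient_add_rank (q.map p.mkQ), (quotientQuotientEquivQuotientSup p q).rank_eq]

variable (f : U →ₗ[K] V) (g : V →ₗ[K] W)

lemma LinearMap.rank_ker_comp :
    Module.rank K (ker (g ∘ₗ f)) =
      Module.rank K (ker f) + Module.rank K (range f ⊓ ker g : Submodule K V) := by
  have h := (f.domRestrict (ker (g ∘ₗ f))).rank_range_add_rank_ker
  rw [ker_domRestrict, rank_comap_subtype, inf_of_le_right (ker_le_ker_comp f g),
    range_domRestrict, ker_comp, map_comap_eq] at h
  rw [ker_comp, ← h, add_comm]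

lemma LinearMap.rank_quotient_range_comp :
    Module.rank K (W ⧸ range (g ∘ₗ f)) =
      Module.rank K (V ⧸ range f ⊔ ker g) + Module.rank K (W ⧸ range g) := by
  let q := (range (g ∘ₗ f)).mkQ
  have hψ : ker (q ∘ₗ g) = range f ⊔ ker g := by
    rw [ker_comp, ker_mkQ, range_comp, comap_map_eq]
  rw [← rank_quotient_add_rank ((range g).map q), add_comm,
    (quotientQuotientEquivQuotient _ _ (range_comp_le_range f g)).rank_eq,
    ← range_comp, ← (q ∘ₗ g).quotKerEquivRange.rank_eq, hψ]

theorem LinearMap.rank_ker_comp_add_rank_quotient_range :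
    Module.rank K (ker (g ∘ₗ f)) + Module.rank K (W ⧸ range g) + Module.rank K (V ⧸ range f) =
      Module.rank K (ker f) + Module.rank K (ker g) + Module.rank K (W ⧸ range (g ∘ₗ f)) := by
  rw [rank_ker_comp, rank_quotient_range_comp, (range f).rank_eq_rank_inf_add (ker g),
    (range f).rank_quotient_eq_rank_quotient_sup_add (ker g)]
  ring

lemma LinearMap.rank_ker_comp_le :
    Module.rank K (ker (g ∘ₗ f)) ≤ Module.rank K (ker f) + Module.rank K (ker g) := by
  rw [rank_ker_comp]
  gcongr
  exact rank_mono inf_le_right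

lemma LinearMap.rank_quotient_range_comp_le :
    Module.rank K (W ⧸ range (g ∘ₗ f)) ≤
      Module.rank K (V ⧸ range f) + Module.rank K (W ⧸ range g) := by
  rw [rank_quotient_range_comp, (range f).rank_quotient_eq_rank_quotient_sup_add (ker g)]
  gcongr
  exact le_self_add

end AlgebraicIndex

section TopologicalModule

variable {R M : Type*} [Semiring R] [AddCommMonoid M] [Module R M] [TopologicalSpace M]
  {P Q A : M →L[R] M}

lemma IsIdempotentElem.comp_eq_right_of_range_le (hP : IsIdempotentElem P)
    (h : A.range ≤ P.range) : P ∘L A = A := by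
  ext x
  obtain ⟨y, hy : P y = A x⟩ := h ⟨x, rfl⟩
  change P (A x) = A x
  rw [← hy]
  exact congr($hP y)

lemma ContinuousLinearMap.range_le_of_comp_eq (h : P ∘L A = A) : A.range ≤ P.range :=
  h ▸ LinearMap.range_comp_le_range (A : M →ₗ[R] M) (P : M →ₗ[R] M)

lemma ContinuousLinearMap.map_range_of_comp_eq (h : A ∘L Q = A) :
    Q.range.map (A : M →ₗ[R] M) = A.range := by
  rw [← LinearMap.range_comp]
  exact congr(LinearMap.range ($h : M →ₗ[R] M))

lemma ContinuousLinearMap.ker_mem_invtSubmodule_of_commute {y : M →L[R] M} (h : Commute A y) :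
    A.ker ∈ Module.End.invtSubmodule (y : M →ₗ[R] M) := fun x (hx : A x = 0) => by
  change A (y x) = 0
  simpa [hx] using congr($h.eq x)

lemma ContinuousLinearMap.range_mem_invtSubmodule_of_commute {y : M →L[R] M} (h : Commute A y) :
    A.range ∈ Module.End.invtSubmodule (y : M →ₗ[R] M) := by
  rintro _ ⟨x, rfl⟩
  exact ⟨y x, congr($h.eq x)⟩

end TopologicalModule

lemma ContinuousLinearMap.range_sup_range_eq_of_range_sub_le {R M : Type*} [Ring R]
    [AddCommGroup M] [Module R M] [TopologicalSpace M] [IsTopologicalAddGroup M]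
    {P T E : M →L[R] M} (hPT : P ∘L T = T) (hPE : P ∘L E = E) (h : (P - E).range ≤ T.range) :
    T.range ⊔ E.range = P.range := by
  refine le_antisymm (sup_le (range_le_of_comp_eq hPT) (range_le_of_comp_eq hPE)) ?_
  rintro _ ⟨x, rfl⟩
  simpa using Submodule.add_mem_sup (h ⟨x, rfl⟩) (LinearMap.mem_range_self (E : M →ₗ[R] M) x)

section CornerRestrict

variable {K M : Type*} [DivisionRing K] [AddCommGroup M] [Module K M] [TopologicalSpace M]

open LinearMap

def ContinuousLinearMap.cornerRestrict (A P Q : M →L[K] M) (h : P ∘L A = A) :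
    Q.range →ₗ[K] P.range :=
  (A : M →ₗ[K] M).restrict fun x _ => range_le_of_comp_eq h ⟨x, rfl⟩

lemma ContinuousLinearMap.cornerRestrict_comp {G P Q S T : M →L[K] M} (hGS : G ∘L S = S)
    (hPT : P ∘L T = T) (hGST : G ∘L (S ∘L T) = S ∘L T) :
    (S ∘L T).cornerRestrict G Q hGST = S.cornerRestrict G P hGS ∘ₗ T.cornerRestrict P Q hPT :=
  rfl

lemma ContinuousLinearMap.rank_ker_cornerRestrict {P Q A : M →L[K] M} (h : P ∘L A = A) :
    Module.rank K (ker (A.cornerRestrict P Q h)) =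
      Module.rank K (A.ker ⊓ Q.range : Submodule K M) := by
  rw [cornerRestrict, ker_restrict, Submodule.rank_comap_subtype, inf_comm]

end CornerRestrict

section HilbertSpace

variable {𝕜 E F : Type*} [RCLike 𝕜] [NormedAddCommGroup E] [InnerProductSpace 𝕜 E]
  [NormedAddCommGroup F] [InnerProductSpace 𝕜 F]

lemma Submodule.exists_isClosed_isCompl_of_isClosed_sup [CompleteSpace F] {V D : Submodule 𝕜 F}
    [FiniteDimensional 𝕜 D] (h : IsClosed ((V ⊔ D : Submodule 𝕜 F) : Set F)) :
    ∃ C : Submodule 𝕜 F, IsClosed (C : Set F) ∧ IsCompl V C := by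
  have : CompleteSpace (V ⊔ D : Submodule 𝕜 F) := h.completeSpace_coe
  refine ⟨(V ⊓ D)ᗮ ⊓ D ⊔ (V ⊔ D)ᗮ, ?_, ?_, ?_⟩
  · rw [sup_comm]
    exact isClosed_sup_finiteDimensional _ _ (isClosed_orthogonal _)
  · rw [disjoint_def]
    rintro x hxV hxC
    obtain ⟨d, hd, k, hk, rfl⟩ := mem_sup.1 hxC
    have hkVD : k ∈ V ⊔ D := by
      simpa using sub_mem (mem_sup_left hxV) (mem_sup_right hd.2)
    obtain rfl : k = 0 := disjoint_def.1 (orthogonal_disjoint _) k hkVD hk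
    rw [add_zero] at hxV ⊢
    exact disjoint_def.1 (orthogonal_disjoint _) d (mem_inf.2 ⟨hxV, hd.2⟩) hd.1
  · rw [codisjoint_iff, eq_top_iff, ← sup_orthogonal_of_hasOrthogonalProjection (K := V ⊔ D)]
    refine sup_le_sup_right (sup_le le_sup_left ?_) _ |>.trans (sup_assoc _ _ _).le
    conv_lhs => rw [← sup_orthogonal_inf_of_hasOrthogonalProjection (inf_le_right : V ⊓ D ≤ D)]
    exact sup_le_sup_right inf_le_left _

lemma ContinuousLinearMap.isClosed_range_of_isCompl [CompleteSpace E] [CompleteSpace F]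
    (B : E →L[𝕜] F) {C : Submodule 𝕜 F} (hC : IsClosed (C : Set F)) (h : IsCompl B.range C) :
    IsClosed (B.range : Set F) := by
  let f := B ∘L B.kerᗮ.subtypeL
  have hrange : f.range = B.range := by
    change LinearMap.range ((B : E →ₗ[𝕜] F) ∘ₗ B.kerᗮ.subtype) = _
    rw [LinearMap.range_comp, Submodule.range_subtype, Submodule.map_eq_range_iff,
      codisjoint_iff, sup_comm]
    exact Submodule.sup_orthogonal_of_hasOrthogonalProjection
  have hker : f.ker = ⊥ := LinearMap.ker_eq_bot'.2 fun x hx =>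
    Subtype.ext (inner_self_eq_zero.1 (x.2 _ hx))
  rw [← hrange] at h ⊢
  exact f.closed_complemented_range_of_isCompl_of_ker_eq_bot C h hC hker

lemma ContinuousLinearMap.isClosed_range_of_isClosed_sup [CompleteSpace E] [CompleteSpace F]
    (B : E →L[𝕜] F) (D : Submodule 𝕜 F) [FiniteDimensional 𝕜 D]
    (h : IsClosed ((B.range ⊔ D : Submodule 𝕜 F) : Set F)) : IsClosed (B.range : Set F) :=
  have ⟨_, hC, hcompl⟩ := Submodule.exists_isClosed_isCompl_of_isClosed_sup h
  B.isClosed_range_of_isCompl hC hcompl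

lemma Submodule.isCompl_comap_subtype_orthogonal {Z M : Submodule 𝕜 E}
    [Z.HasOrthogonalProjection] (h : Z ≤ M) :
    IsCompl (Z.comap M.subtype) (Zᗮ.comap M.subtype) := by
  constructor
  · rw [disjoint_def]
    exact fun x h₁ h₂ => Subtype.ext (disjoint_def.1 Z.orthogonal_disjoint _ h₁ h₂)
  · rw [codisjoint_iff, eq_top_iff]
    rintro x -
    have hx : Z.starProjection x ∈ M := h (Z.starProjection_apply_mem x)
    exact mem_sup.2 ⟨⟨_, hx⟩, Z.starProjection_apply_mem x, x - ⟨_, hx⟩,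
      Z.sub_starProjection_mem_orthogonal x, add_sub_cancel _ _⟩

lemma Submodule.rank_quotient_comap_subtype {Z M : Submodule 𝕜 E} [Z.HasOrthogonalProjection]
    (h : Z ≤ M) : Module.rank 𝕜 (M ⧸ Z.comap M.subtype) = Module.rank 𝕜 (M ⊓ Zᗮ : Submodule 𝕜 E) :=
  (quotientEquivOfIsCompl _ _ (isCompl_comap_subtype_orthogonal h)).rank_eq.trans
    (rank_comap_subtype M Zᗮ)

variable [CompleteSpace E]

lemma IsStarProjection.comp_eq_of_range_le {P A : E →L[𝕜] E} (hP : IsStarProjection P)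
    (hA : IsStarProjection A) (h : A.range ≤ P.range) : A ∘L P = A := by
  simpa [adjoint_comp, hP.isSelfAdjoint.adjoint_eq, hA.isSelfAdjoint.adjoint_eq] using
    congr(adjoint $(hP.isIdempotentElem.comp_eq_right_of_range_le h))

lemma range_sub_starProjection_le {G : E →L[𝕜] E} (hG : IsStarProjection G)
    {Z K : Submodule 𝕜 E} [Z.HasOrthogonalProjection] [K.HasOrthogonalProjection]
    (hK : K = Zᗮ ⊓ G.range) (hZ : Z ≤ G.range) : (G - K.starProjection).range ≤ Z := by
  have hKG : K.starProjection.range ≤ G.range := by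
    rw [Submodule.range_starProjection, hK]
    exact inf_le_right
  have hGE := hG.isIdempotentElem.comp_eq_right_of_range_le hKG
  have hEG := hG.comp_eq_of_range_le isStarProjection_starProjection hKG
  have hZK : Z ≤ Kᗮ :=
    Z.le_orthogonal_orthogonal.trans (Submodule.orthogonal_le (hK ▸ inf_le_left))
  have hrange : G.range ⊓ Kᗮ = Z := by
    rw [← Submodule.sup_orthogonal_inf_of_hasOrthogonalProjection hZ, ← hK,
      sup_inf_assoc_of_le _ hZK, K.inf_orthogonal_eq_bot, sup_bot_eq]
  rintro _ ⟨x, rfl⟩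
  have hG' : G ((G - K.starProjection) x) = (G - K.starProjection) x := by
    rw [← comp_apply, comp_sub, ← mul_def, hG.isIdempotentElem.eq, hGE]
  have hK' : K.starProjection ((G - K.starProjection) x) = 0 := by
    rw [← comp_apply, comp_sub, hEG, ← mul_def, (Submodule.isIdempotentElem_starProjection K).eq,
      sub_self, zero_apply]
  exact hrange.le ⟨⟨_, hG'⟩, (Submodule.starProjection_apply_eq_zero_iff K).1 hK'⟩

end HilbertSpace

lemma isProjOp_iff_isStarProjection {P : H →L[ℂ] H} : IsProjOp P ↔ IsStarProjection P :=
  ⟨fun h => ⟨h.2, h.1⟩, fun h => ⟨h.2, h.1⟩⟩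

lemma projOnto_eq_starProjection {K : Submodule ℂ H} (hK : IsClosed (K : Set H))
    [K.HasOrthogonalProjection] : projOnto K = K.starProjection := by
  change K.topologicalClosure.starProjection = _
  exact Submodule.starProjection_inj.2 hK.submodule_topologicalClosure_eq

lemma starProjection_ker_inf_range_mem {A G : H →L[ℂ] H} (hA : A ∈ N) (hG : G ∈ N)
    [(A.ker ⊓ G.range).HasOrthogonalProjection] : (A.ker ⊓ G.range).starProjection ∈ N := by
  refine (VonNeumannAlgebra.IsStarProjection.mem_iff isStarProjection_starProjection N).2
    fun y hy => ?_
  rw [Submodule.range_starProjection]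
  have hy := VonNeumannAlgebra.mem_commutant_iff.1 hy
  exact Module.End.invtSubmodule.inf_mem (ker_mem_invtSubmodule_of_commute (hy A hA))
    (range_mem_invtSubmodule_of_commute (hy G hG))

section MemCorner

variable {G P Q S T : H →L[ℂ] H}

lemma MemCorner.left_comp (hT : MemCorner N P Q T) (hP : IsIdempotentElem P) : P ∘L T = T := by
  rw [← hT.2, ← comp_assoc, ← mul_def P P, hP.eq]

lemma MemCorner.comp_right (hT : MemCorner N P Q T) (hQ : IsIdempotentElem Q) : T ∘L Q = T := by
  rw [← hT.2, comp_assoc, comp_assoc, ← mul_def Q Q, hQ.eq]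

lemma MemCorner.comp (hS : MemCorner N G P S) (hT : MemCorner N P Q T) (hG : IsIdempotentElem G)
    (hQ : IsIdempotentElem Q) : MemCorner N G Q (S ∘L T) :=
  ⟨mul_mem hS.1 hT.1, by rw [comp_assoc, ← comp_assoc, hS.left_comp hG, hT.comp_right hQ]⟩

end MemCorner

lemma ContinuousLinearMap.rank_quotient_range_cornerRestrict {P Q A : H →L[ℂ] H} (h : P ∘L A = A)
    (hAQ : A ∘L Q = A) (hA : IsClosed (A.range : Set H)) :
    Module.rank ℂ (P.range ⧸ LinearMap.range (A.cornerRestrict P Q h)) =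
      Module.rank ℂ ((adjoint A).ker ⊓ P.range : Submodule ℂ H) := by
  have : CompleteSpace A.range := hA.completeSpace_coe
  rw [cornerRestrict, LinearMap.range_restrict, map_range_of_comp_eq hAQ,
    Submodule.rank_quotient_comap_subtype (range_le_of_comp_eq h),
    A.orthogonal_range, inf_comm]

namespace Trace

variable (tr : Trace N)

lemma τ_zero : tr.τ 0 = 0 := by
  simpa using tr.map_smul 0 0 ContinuousLinearMap.isPositive_zero

lemma τ_sum {ι : Type*} (s : Finset ι) {A : ι → H →L[ℂ] H} (hA : ∀ i ∈ s, (A i).IsPositive) :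
    tr.τ (∑ i ∈ s, A i) = ∑ i ∈ s, tr.τ (A i) := by
  classical
  induction s using Finset.induction_on with
  | empty => simpa using tr.τ_zero
  | insert i s hi ih =>
    have hs : ∀ j ∈ s, (A j).IsPositive := fun j hj => hA j (Finset.mem_insert_of_mem hj)
    rw [Finset.sum_insert hi, Finset.sum_insert hi,
      tr.map_add _ _ (hA i (Finset.mem_insert_self i s)) (ContinuousLinearMap.isPositive_sum s hs),
      ih hs]

lemma τ_mono {A B : H →L[ℂ] H} (hA : A.IsPositive) (hAB : A ≤ B) : tr.τ A ≤ tr.τ B := by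
  have h := tr.map_add A (B - A) hA ((ContinuousLinearMap.le_def A B).1 hAB)
  rw [add_sub_cancel] at h
  exact h ▸ le_self_add

lemma τ_rankOne_self_eq {e e' : H} (he : ‖e‖ = 1) (he' : ‖e'‖ = 1) :
    tr.τ (rankOne ℂ e e) = tr.τ (rankOne ℂ e' e') := by
  simpa [rankOne_comp_rankOne, inner_self_eq_norm_sq_to_K, he, he'] using
    tr.tracial (rankOne ℂ e' e)

/-- The common value of `τ` on rank-one projections; by convention `⊤` when `H = 0`. -/
def rankOneTrace : ℝ≥0∞ := ⨅ e : {e : H // ‖e‖ = 1}, tr.τ (rankOne ℂ (e : H) e)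

lemma rankOneTrace_eq {e : H} (he : ‖e‖ = 1) : tr.rankOneTrace = tr.τ (rankOne ℂ e e) :=
  le_antisymm (iInf_le_of_le ⟨e, he⟩ le_rfl) (le_iInf fun e' => (tr.τ_rankOne_self_eq he e'.2).le)

lemma rankOneTrace_ne_zero : tr.rankOneTrace ≠ 0 := by
  by_cases h : ∃ e : H, ‖e‖ = 1
  · obtain ⟨e, he⟩ := h
    have he0 : e ≠ 0 := by rintro rfl; simp at he
    rw [tr.rankOneTrace_eq he]
    exact fun h0 => rankOne_ne_zero he0 he0 (tr.faithful _ (isPositive_rankOne_self e) h0)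
  · have : IsEmpty {e : H // ‖e‖ = 1} := ⟨fun e => h ⟨e, e.2⟩⟩
    rw [rankOneTrace, iInf_of_empty]
    exact ENNReal.top_ne_zero

lemma τ_starProjection_of_finiteDimensional {e : H} (he : ‖e‖ = 1) (U : Submodule ℂ H)
    [FiniteDimensional ℂ U] : tr.τ U.starProjection = finrank ℂ U * tr.τ (rankOne ℂ e e) := by
  let b := stdOrthonormalBasis ℂ U
  rw [b.starProjection_eq_sum_rankOne, tr.τ_sum _ fun i _ => isPositive_rankOne_self _]
  have hb (i) : tr.τ (rankOne ℂ (b i : H) (b i)) = tr.τ (rankOne ℂ e e) :=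
    tr.τ_rankOne_self_eq (b.orthonormal.1 i) he
  simp [hb]

lemma τ_starProjection_of_not_finiteDimensional {e : H} (he : ‖e‖ = 1) (U : Submodule ℂ H)
    [U.HasOrthogonalProjection] (hU : ¬ FiniteDimensional ℂ U) : tr.τ U.starProjection = ⊤ := by
  have hle : ∀ n : ℕ, n * tr.τ (rankOne ℂ e e) ≤ tr.τ U.starProjection := by
    intro n
    have hn : (n : Cardinal) ≤ Module.rank ℂ U :=
      Cardinal.natCast_lt_aleph0.le.trans (not_lt.1 (mt Module.rank_lt_aleph0_iff.1 hU))
    obtain ⟨v, hv⟩ := exists_linearIndependent_of_le_rank hn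
    let V := Submodule.span ℂ (Set.range (Subtype.val ∘ v))
    have : FiniteDimensional ℂ V := FiniteDimensional.span_of_finite ℂ (Set.finite_range _)
    have hVU : V ≤ U := Submodule.span_le.2 (Set.range_subset_iff.2 fun i => (v i).2)
    have hV : finrank ℂ V = n :=
      (finrank_span_eq_card (hv.map' U.subtype U.ker_subtype)).trans (Fintype.card_fin n)
    rw [← hV, ← tr.τ_starProjection_of_finiteDimensional he]
    exact tr.τ_mono (.of_isStarProjection isStarProjection_starProjection)
      (Submodule.starProjection_le_starProjection_iff.2 hVU)
  have hc : tr.τ (rankOne ℂ e e) ≠ 0 := tr.rankOneTrace_eq he ▸ tr.rankOneTrace_ne_zero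
  by_contra htop
  obtain ⟨n, hn⟩ := ENNReal.exists_nat_mul_gt hc htop
  exact (hle n).not_gt hn

theorem τ_starProjection (U : Submodule ℂ H) [U.HasOrthogonalProjection] :
    tr.τ U.starProjection = (Module.rank ℂ U).toENat * tr.rankOneTrace := by
  by_cases h : ∃ e : H, ‖e‖ = 1
  · obtain ⟨e, he⟩ := h
    rw [tr.rankOneTrace_eq he]
    by_cases hU : FiniteDimensional ℂ U
    · rw [tr.τ_starProjection_of_finiteDimensional he, ← Module.finrank_eq_rank,
        Cardinal.toENat_nat]
      rfl
    · rw [tr.τ_starProjection_of_not_finiteDimensional he U hU,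
        Cardinal.toENat_eq_top.2 (not_lt.1 (mt Module.rank_lt_aleph0_iff.1 hU)),
        ENat.toENNReal_top, ENNReal.top_mul (tr.rankOneTrace_eq he ▸ tr.rankOneTrace_ne_zero)]
  · have : Subsingleton H := ⟨fun x y => by
      by_contra hxy
      exact h ⟨_, norm_smul_inv_norm (𝕜 := ℂ) (sub_ne_zero.2 hxy)⟩⟩
    have hU : U.starProjection = 0 := Subsingleton.elim _ _
    simp [hU, tr.τ_zero]

lemma τ_projOnto {K : Submodule ℂ H} (hK : IsClosed (K : Set H)) :
    tr.τ (projOnto K) = (Module.rank ℂ K).toENat * tr.rankOneTrace := by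
  have : CompleteSpace K := hK.completeSpace_coe
  rw [projOnto_eq_starProjection hK, τ_starProjection]

lemma finiteDimensional_range_of_τ_lt_top {E : H →L[ℂ] H} (hE : IsStarProjection E)
    (h : tr.τ E < ⊤) : FiniteDimensional ℂ E.range := by
  obtain ⟨_, hEq⟩ := isStarProjection_iff_eq_starProjection_range.1 hE
  rw [hEq, τ_starProjection] at h
  by_contra hfd
  rw [Cardinal.toENat_eq_top.2 (not_lt.1 (mt Module.rank_lt_aleph0_iff.1 hfd)),
    ENat.toENNReal_top, ENNReal.top_mul tr.rankOneTrace_ne_zero] at h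
  exact h.false

end Trace

section PQFredholm

variable {tr : Trace N} {G P Q S T A : H →L[ℂ] H}

lemma IsPQFredholm.isClosed_range (hF : IsPQFredholm tr P Q T) (hP : IsStarProjection P)
    (hPT : P ∘L T = T) : IsClosed (T.range : Set H) := by
  obtain ⟨-, -, E, -, hE, hPE, hτE, hrange⟩ := hF
  have := tr.finiteDimensional_range_of_τ_lt_top (isProjOp_iff_isStarProjection.1 hE) hτE
  refine T.isClosed_range_of_isClosed_sup E.range ?_
  rw [range_sup_range_eq_of_range_sub_le hPT hPE hrange]
  exact IsIdempotentElem.isClosed_range hP.isIdempotentElem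

lemma IsPQFredholm.isClosed_range_comp (hSF : IsPQFredholm tr G P S) (hTF : IsPQFredholm tr P Q T)
    (hG : IsStarProjection G) (hGS : G ∘L S = S) (hSP : S ∘L P = S) (hPT : P ∘L T = T) :
    IsClosed ((S ∘L T).range : Set H) := by
  obtain ⟨-, -, ES, -, hES, hGES, hτES, hrS⟩ := hSF
  obtain ⟨-, -, ET, -, hET, hPET, hτET, hrT⟩ := hTF
  have := tr.finiteDimensional_range_of_τ_lt_top (isProjOp_iff_isStarProjection.1 hES) hτES
  have := tr.finiteDimensional_range_of_τ_lt_top (isProjOp_iff_isStarProjection.1 hET) hτET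
  refine (S ∘L T).isClosed_range_of_isClosed_sup (ET.range.map (S : H →ₗ[ℂ] H) ⊔ ES.range) ?_
  have hS : (S ∘L T).range ⊔ ET.range.map (S : H →ₗ[ℂ] H) = S.range := by
    rw [← map_range_of_comp_eq hSP, ← range_sup_range_eq_of_range_sub_le hPT hPET hrT,
      Submodule.map_sup]
    congr 1
    exact LinearMap.range_comp (T : H →ₗ[ℂ] H) (S : H →ₗ[ℂ] H)
  rw [← sup_assoc, hS, range_sup_range_eq_of_range_sub_le hGS hGES hrS]
  exact IsIdempotentElem.isClosed_range hG.isIdempotentElem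

lemma isPQFredholm_of_isClosed_range (hG : G ∈ N) (hGp : IsStarProjection G) (hA : A ∈ N)
    (hGA : G ∘L A = A) (hAcl : IsClosed (A.range : Set H)) (hker : tr.τ (kerProjIn A Q) < ⊤)
    (hcoker : tr.τ (kerProjIn (adjoint A) G) < ⊤) : IsPQFredholm tr G Q A := by
  let K := (adjoint A).ker ⊓ G.range
  have hK : IsClosed (K : Set H) :=
    (adjoint A).isClosed_ker.inter (IsIdempotentElem.isClosed_range hGp.isIdempotentElem)
  have : CompleteSpace K := hK.completeSpace_coe
  have : CompleteSpace A.range := hAcl.completeSpace_coe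
  have hE : kerProjIn (adjoint A) G = K.starProjection := projOnto_eq_starProjection hK
  refine ⟨hker, hcoker, K.starProjection,
    starProjection_ker_inf_range_mem (star_mem hA) hG,
    isProjOp_iff_isStarProjection.2 isStarProjection_starProjection,
    hGp.isIdempotentElem.comp_eq_right_of_range_le ?_, hE ▸ hcoker, ?_⟩
  · rw [Submodule.range_starProjection]
    exact inf_le_right
  · exact range_sub_starProjection_le hGp (by rw [A.orthogonal_range])
      (range_le_of_comp_eq hGA)

end PQFredholm

namespace Trace

variable (tr : Trace N) {G P Q S T : H →L[ℂ] H}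

lemma τ_kerProjIn {A R : H →L[ℂ] H} (hR : IsStarProjection R) :
    tr.τ (kerProjIn A R) =
      (Module.rank ℂ (A.ker ⊓ R.range : Submodule ℂ H)).toENat * tr.rankOneTrace :=
  tr.τ_projOnto (A.isClosed_ker.inter (IsIdempotentElem.isClosed_range hR.isIdempotentElem))

lemma τ_kerProjIn_comp_le (hP : IsStarProjection P) (hQ : IsStarProjection Q) (hGS : G ∘L S = S)
    (hPT : P ∘L T = T) :
    tr.τ (kerProjIn (S ∘L T) Q) ≤ tr.τ (kerProjIn T Q) + tr.τ (kerProjIn S P) := by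
  have h := (T.cornerRestrict P Q hPT).rank_ker_comp_le (S.cornerRestrict G P hGS)
  rw [← cornerRestrict_comp hGS hPT (by rw [← comp_assoc, hGS]), rank_ker_cornerRestrict,
    rank_ker_cornerRestrict, rank_ker_cornerRestrict] at h
  rw [tr.τ_kerProjIn hQ, tr.τ_kerProjIn hQ, tr.τ_kerProjIn hP, ← add_mul, ← ENat.toENNReal_add,
    ← _root_.map_add]
  gcongr

lemma τ_kerProjIn_adjoint_comp_le (hG : IsStarProjection G) (hP : IsStarProjection P)
    (hGS : G ∘L S = S) (hSP : S ∘L P = S) (hPT : P ∘L T = T) (hTQ : T ∘L Q = T)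
    (hS : IsClosed (S.range : Set H)) (hT : IsClosed (T.range : Set H))
    (hST : IsClosed ((S ∘L T).range : Set H)) :
    tr.τ (kerProjIn (adjoint (S ∘L T)) G) ≤
      tr.τ (kerProjIn (adjoint T) P) + tr.τ (kerProjIn (adjoint S) G) := by
  have hGST : G ∘L (S ∘L T) = S ∘L T := by rw [← comp_assoc, hGS]
  have h := (T.cornerRestrict P Q hPT).rank_quotient_range_comp_le (S.cornerRestrict G P hGS)
  rw [← cornerRestrict_comp hGS hPT hGST, rank_quotient_range_cornerRestrict hPT hTQ hT,
    rank_quotient_range_cornerRestrict hGS hSP hS,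
    rank_quotient_range_cornerRestrict hGST (by rw [comp_assoc, hTQ]) hST] at h
  rw [tr.τ_kerProjIn hG, tr.τ_kerProjIn hP, tr.τ_kerProjIn hG, ← add_mul, ← ENat.toENNReal_add,
    ← _root_.map_add]
  gcongr

theorem τ_kerProjIn_comp_add (hG : IsStarProjection G) (hP : IsStarProjection P)
    (hQ : IsStarProjection Q) (hGS : G ∘L S = S) (hSP : S ∘L P = S) (hPT : P ∘L T = T)
    (hTQ : T ∘L Q = T) (hS : IsClosed (S.range : Set H)) (hT : IsClosed (T.range : Set H))
    (hST : IsClosed ((S ∘L T).range : Set H)) :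
    tr.τ (kerProjIn (S ∘L T) Q) + tr.τ (kerProjIn (adjoint S) G) + tr.τ (kerProjIn (adjoint T) P) =
      tr.τ (kerProjIn T Q) + tr.τ (kerProjIn S P) + tr.τ (kerProjIn (adjoint (S ∘L T)) G) := by
  have hGST : G ∘L (S ∘L T) = S ∘L T := by rw [← comp_assoc, hGS]
  have h := (T.cornerRestrict P Q hPT).rank_ker_comp_add_rank_quotient_range
    (S.cornerRestrict G P hGS)
  rw [← cornerRestrict_comp hGS hPT hGST, rank_ker_cornerRestrict, rank_ker_cornerRestrict,
    rank_ker_cornerRestrict, rank_quotient_range_cornerRestrict hPT hTQ hT,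
    rank_quotient_range_cornerRestrict hGS hSP hS,
    rank_quotient_range_cornerRestrict hGST (by rw [comp_assoc, hTQ]) hST] at h
  simp only [tr.τ_kerProjIn hG, tr.τ_kerProjIn hP, tr.τ_kerProjIn hQ, ← add_mul,
    ← ENat.toENNReal_add, ← _root_.map_add, h]

end Trace

theorem pqIndex_comp_general (tr : Trace N) (G P Q T S : H →L[ℂ] H)
    (hG : G ∈ N) (hGproj : IsProjOp G) (hPproj : IsProjOp P)
    (hQproj : IsProjOp Q)
    (hT : MemCorner N P Q T) (hS : MemCorner N G P S)
    (hTF : IsPQFredholm tr P Q T) (hSF : IsPQFredholm tr G P S) :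
    MemCorner N G Q (S ∘L T) ∧ IsPQFredholm tr G Q (S ∘L T) ∧
      pqIndex tr G Q (S ∘L T) = pqIndex tr G P S + pqIndex tr P Q T := by
  rw [isProjOp_iff_isStarProjection] at hGproj hPproj hQproj
  have hGS := hS.left_comp hGproj.isIdempotentElem
  have hSP := hS.comp_right hPproj.isIdempotentElem
  have hPT := hT.left_comp hPproj.isIdempotentElem
  have hTQ := hT.comp_right hQproj.isIdempotentElem
  have hScl := hSF.isClosed_range hGproj hGS
  have hTcl := hTF.isClosed_range hPproj hPT
  have hSTcl := hSF.isClosed_range_comp hTF hGproj hGS hSP hPT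
  have hker := (tr.τ_kerProjIn_comp_le hPproj hQproj hGS hPT).trans_lt
    (ENNReal.add_lt_top.2 ⟨hTF.1, hSF.1⟩)
  have hcoker := (tr.τ_kerProjIn_adjoint_comp_le hGproj hPproj hGS hSP hPT hTQ hScl hTcl
    hSTcl).trans_lt (ENNReal.add_lt_top.2 ⟨hTF.2.1, hSF.2.1⟩)
  have hST := hS.comp hT hGproj.isIdempotentElem hQproj.isIdempotentElem
  refine ⟨hST, isPQFredholm_of_isClosed_range hG hGproj hST.1 (hST.left_comp
    hGproj.isIdempotentElem) hSTcl hker hcoker, ?_⟩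
  have h := congrArg ENNReal.toReal (tr.τ_kerProjIn_comp_add hGproj hPproj hQproj hGS hSP hPT hTQ
    hScl hTcl hSTcl)
  simp only [ENNReal.toReal_add, ENNReal.add_ne_top, hker.ne, hcoker.ne, hTF.1.ne, hTF.2.1.ne,
    hSF.1.ne, hSF.2.1.ne, ne_eq, not_false_eq_true, and_self] at h
  simp only [pqIndex]
  linarith

/-- If `T ∈ PNQ` is `(P·Q)`-Fredholm and `S ∈ GNP` is `(G·P)`-Fredholm, then
`ST ∈ GNQ` is `(G·Q)`-Fredholm and `Ind(ST) = Ind(S) + Ind(T)`. -/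
theorem pqIndex_comp (tr : Trace N) (G P Q T S : H →L[ℂ] H)
    (hG : G ∈ N) (hGproj : IsProjOp G) (hP : P ∈ N) (hPproj : IsProjOp P)
    (hQ : Q ∈ N) (hQproj : IsProjOp Q)
    (hT : MemCorner N P Q T) (hS : MemCorner N G P S)
    (hTF : IsPQFredholm tr P Q T) (hSF : IsPQFredholm tr G P S) :
    MemCorner N G Q (S ∘L T) ∧ IsPQFredholm tr G Q (S ∘L T) ∧
      pqIndex tr G Q (S ∘L T) = pqIndex tr G P S + pqIndex tr P Q T :=
  pqIndex_comp_general tr G P Q T S hG hGproj hPproj hQproj hT hS hTF hSF
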